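/- arXiv:1105.0410 — 4 statements merged into one kernel-verified Lean document; each statement's English description precedes it below -/
import Mathlib

section
/- Let K ⊆ ℝⁿ have nonempty interior and let y be a truncated moment sequence of degree d. If y lies in the interior of the set R_d(K) of tms's admitting a K-measure, then the Riesz functional L_y is strictly K-positive: L_y(p) > 0 for every polynomial p of degree ≤ d that is nonnegative on K and not identically zero on K. -/
open MeasureTheory MvPolynomial

/-- Total degree of a multi-index. -/
def mdeg {n : ℕ} (α : Fin n →₀ ℕ) : ℕ := α.sum fun _ k => k

/-- The Riesz functional of a truncated moment sequence. -/
noncomputable def Riesz {n : ℕ} (y : (Fin n →₀ ℕ) → ℝ) (p : MvPolynomial (Fin n) ℝ) : ℝ :=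
  ∑ α ∈ p.support, coeff α p * y α

/-- `Rd d K` : the set of (truncated, degree `d`) moment sequences admitting a representing
nonnegative Borel measure supported in `K`. Membership only depends on the entries of
degree at most `d`. -/
def Rd {n : ℕ} (d : ℕ) (K : Set (Fin n → ℝ)) : Set ((Fin n →₀ ℕ) → ℝ) :=
  {y | ∃ μ : Measure (Fin n → ℝ), μ Kᶜ = 0 ∧
    ∀ α : Fin n →₀ ℕ, mdeg α ≤ d →
      Integrable (fun x => ∏ i, x i ^ α i) μ ∧ (∫ x, ∏ i, x i ^ α i ∂μ) = y α}

lemma riesz_nonneg {n d : ℕ} (K : Set (Fin n → ℝ)) (z : (Fin n →₀ ℕ) → ℝ)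
    (hz : z ∈ Rd d K) (p : MvPolynomial (Fin n) ℝ) (hd : p.totalDegree ≤ d)
    (hpos : ∀ x ∈ K, 0 ≤ eval x p) : 0 ≤ Riesz z p := by
  obtain ⟨μ, hμK, hμ⟩ := hz
  have hdeg : ∀ α ∈ p.support, mdeg α ≤ d := fun α hα =>
    le_trans (le_totalDegree hα) hd
  have hint : ∀ α ∈ p.support, Integrable (fun x => coeff α p * ∏ i, x i ^ α i) μ :=
    fun α hα => ((hμ α (hdeg α hα)).1).const_mul _
  have key : Riesz z p = ∫ x, eval x p ∂μ := by
    have h1 : ∀ x : Fin n → ℝ, eval x p = ∑ α ∈ p.support, coeff α p * ∏ i, x i ^ α i :=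
      fun x => eval_eq' x p
    calc Riesz z p = ∑ α ∈ p.support, ∫ x, coeff α p * ∏ i, x i ^ α i ∂μ := by
          unfold Riesz
          refine Finset.sum_congr rfl fun α hα => ?_
          rw [MeasureTheory.integral_const_mul, (hμ α (hdeg α hα)).2]
      _ = ∫ x, ∑ α ∈ p.support, coeff α p * ∏ i, x i ^ α i ∂μ :=
          (integral_finset_sum _ hint).symm
      _ = ∫ x, eval x p ∂μ := by simp_rw [← h1]
  rw [key]
  refine integral_nonneg_of_ae ?_
  have hsub : {x | ¬ 0 ≤ eval x p} ⊆ Kᶜ := fun x hx hxK => hx (hpos x hxK)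
  exact (ae_iff).2 (measure_mono_null hsub hμK)

/-- If `K` has nonempty interior and the tms `y` lies in the interior of `R_d(K)`, then
the Riesz functional of `y` is strictly `K`-positive. -/
theorem strictly_K_positive_of_mem_interior {n d : ℕ} (K : Set (Fin n → ℝ))
    (hK : (interior K).Nonempty) (y : (Fin n →₀ ℕ) → ℝ)
    (hy : y ∈ interior (Rd d K)) :
    ∀ p : MvPolynomial (Fin n) ℝ, p.totalDegree ≤ d →
      (∀ x ∈ K, 0 ≤ eval x p) → ¬ (∀ x ∈ K, eval x p = 0) →
      0 < Riesz y p := by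
  intro p hd hpos hnz
  have hp0 : p ≠ 0 := by rintro rfl; exact hnz (fun x _ => by simp)
  set c : ℝ := ∑ α ∈ p.support, (coeff α p) ^ 2 with hc
  have hcpos : 0 < c := by
    refine Finset.sum_pos' (fun α _ => sq_nonneg _) ?_
    obtain ⟨α, hα⟩ := (support_nonempty).2 hp0
    exact ⟨α, hα, pow_two_pos_of_ne_zero (mem_support_iff.1 hα)⟩
  set f : ℝ → ((Fin n →₀ ℕ) → ℝ) := fun t α => y α - t * coeff α p with hf
  have hcont : Continuous f := by
    apply continuous_pi
    intro α
    exact continuous_const.sub (continuous_id.mul continuous_const)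
  have h0 : f 0 = y := by funext α; simp [hf]
  have hev : ∀ᶠ t in nhds (0 : ℝ), f t ∈ Rd d K := by
    have := hcont.continuousAt (x := (0 : ℝ))
    have hmem : interior (Rd d K) ∈ nhds (f 0) := by
      rw [h0]; exact isOpen_interior.mem_nhds hy
    exact (this.eventually_mem hmem).mono (fun t ht => interior_subset ht)
  have hev' : ∀ᶠ t in nhdsWithin (0:ℝ) (Set.Ioi 0), f t ∈ Rd d K ∧ 0 < t := by
    filter_upwards [hev.filter_mono nhdsWithin_le_nhds,
      self_mem_nhdsWithin] with t h1 h2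
    exact ⟨h1, h2⟩
  obtain ⟨t, hmem, ht⟩ := hev'.exists
  have h1 : 0 ≤ Riesz (f t) p := riesz_nonneg K (f t) hmem p hd hpos
  have h2 : Riesz (f t) p = Riesz y p - t * c := by
    unfold Riesz
    rw [hf, hc, Finset.mul_sum, ← Finset.sum_sub_distrib]
    refine Finset.sum_congr rfl fun α hα => ?_
    ring
  linarith [mul_pos ht hcpos]
end

section
/- Let K ⊆ ℝⁿ be any set, y a tms of degree d with nonempty set meas(y,K) of representing K-measures. If μ is an extreme point of the convex set meas(y,K), then μ is finitely atomic with |supp(μ)| ≤ binom(n+d, d). -/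
open MeasureTheory MvPolynomial

/-- `measSet K d y` : the set of nonnegative Borel measures supported in `K`
representing the tms `y` of degree `d`. -/
def measSet {n : ℕ} (K : Set (Fin n → ℝ)) (d : ℕ) (y : (Fin n →₀ ℕ) → ℝ) :
    Set (Measure (Fin n → ℝ)) :=
  {μ | μ Kᶜ = 0 ∧ ∀ α : Fin n →₀ ℕ, mdeg α ≤ d →
      Integrable (fun x => ∏ i, x i ^ α i) μ ∧ (∫ x, ∏ i, x i ^ α i ∂μ) = y α}

/-!
If `μ` is not carried by `N = (n + d).choose d` points, its support contains `N + 1` points with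
pairwise disjoint open neighbourhoods `U p` of positive measure. The moment vectors of `μ`
restricted to the `U p` are `N + 1` vectors in a space of dimension at most `N`, so a nontrivial
step function `f = ∑ p, c p • 𝟙_{U p}` with `|f| ≤ 1` is orthogonal to every monomial of degree
`≤ d`. The measures `(1 + f) μ` and `(1 - f) μ` then represent the same moments, are distinct, and
have `μ` as their midpoint.
-/

open scoped Function

section StepFunction

variable {X ι : Type*} [Fintype ι] {U : ι → Set X} (c : ι → ℝ)

lemma sum_indicator_apply_of_mem (hU : Pairwise (Disjoint on U)) {x : X} {j : ι}
    (hx : x ∈ U j) : ∑ i, (U i).indicator (fun _ => c i) x = c j := by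
  rw [Fintype.sum_eq_single j fun i hij =>
    Set.indicator_of_notMem (Set.disjoint_left.mp (hU hij.symm) hx) _]
  exact Set.indicator_of_mem hx _

lemma abs_sum_indicator_le_one (hU : Pairwise (Disjoint on U)) (hc : ∀ i, |c i| ≤ 1) (x : X) :
    |∑ i, (U i).indicator (fun _ => c i) x| ≤ 1 := by
  by_cases hx : ∃ j, x ∈ U j
  · obtain ⟨j, hj⟩ := hx
    rw [sum_indicator_apply_of_mem c hU hj]
    exact hc j
  · rw [not_exists] at hx
    simp [Set.indicator_of_notMem (hx _)]

lemma integral_sum_indicator_mul [MeasurableSpace X] {μ : Measure X}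
    (hU : ∀ i, MeasurableSet (U i)) {g : X → ℝ} (hg : Integrable g μ) :
    ∫ x, (∑ i, (U i).indicator (fun _ => c i) x) * g x ∂μ =
      ∑ i, c i * ∫ x in U i, g x ∂μ := by
  simp only [Finset.sum_mul, ← Set.indicator_mul_left]
  rw [integral_finsetSum _ fun i _ => (hg.const_mul (c i)).indicator (hU i)]
  exact Finset.sum_congr rfl fun i _ => by rw [integral_indicator (hU i), integral_const_mul]

end StepFunction

section Support

variable {X : Type*} [TopologicalSpace X] [HereditarilyLindelofSpace X] [MeasurableSpace X]
  {μ : Measure X} {N : ℕ}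

lemma exists_finset_subset_support_card_eq
    (h : ¬ ∃ s : Finset X, μ (↑s : Set X)ᶜ = 0 ∧ s.card ≤ N) :
    ∃ t : Finset X, ↑t ⊆ μ.support ∧ t.card = N + 1 := by
  by_cases hS : μ.support.encard ≤ N
  · obtain ⟨hfin, hcard⟩ := Set.encard_le_coe_iff_finite_ncard_le.mp hS
    refine (h ⟨hfin.toFinset, by simp, ?_⟩).elim
    rwa [← Set.ncard_eq_toFinset_card μ.support hfin]
  · obtain ⟨t, hts, htc⟩ := Set.exists_subset_encard_eq (k := N + 1)
      ((ENat.add_one_le_iff (ENat.natCast_ne_top N)).mpr (not_le.mp hS))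
    obtain ⟨t, rfl⟩ := (Set.finite_of_encard_eq_coe htc).exists_finset_coe
    exact ⟨t, hts, by exact_mod_cast (Set.encard_coe_eq_coe_finsetCard t).symm.trans htc⟩

lemma exists_pairwise_disjoint_isOpen_pos [T2Space X] [OpensMeasurableSpace X]
    (h : ¬ ∃ s : Finset X, μ (↑s : Set X)ᶜ = 0 ∧ s.card ≤ N) :
    ∃ t : Finset X, t.card = N + 1 ∧ ∃ U : t → Set X,
      (∀ p, IsOpen (U p) ∧ 0 < μ (U p)) ∧ Pairwise (Disjoint on U) := by
  obtain ⟨t, hts, htc⟩ := exists_finset_subset_support_card_eq h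
  obtain ⟨U, hU, hUd⟩ := t.finite_toSet.t2_separation
  refine ⟨t, htc, fun p => U p, fun p => ⟨(hU p).2, ?_⟩,
    fun p q hpq => hUd p.2 q.2 (Subtype.coe_injective.ne hpq)⟩
  exact (nhds_basis_opens _).mem_measureSupport.mp (hts p.2) _ (hU p)

end Support

lemma one_add_nonneg_of_abs_le_one {t : ℝ} (ht : |t| ≤ 1) : 0 ≤ 1 + t :=
  neg_le_iff_add_nonneg'.mp (neg_le_of_abs_le ht)

namespace MeasureTheory.Measure

variable {X : Type*} [MeasurableSpace X] (μ : Measure X) {f : X → ℝ}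

noncomputable def perturb (f : X → ℝ) : Measure X :=
  μ.withDensity fun x => ENNReal.ofReal (1 + f x)

lemma perturb_absolutelyContinuous : perturb μ f ≪ μ :=
  withDensity_absolutelyContinuous _ _

variable {μ}

lemma integrable_perturb (hf : Measurable f) (hf1 : ∀ x, |f x| ≤ 1) {g : X → ℝ}
    (hg : Integrable g μ) : Integrable g (perturb μ f) := by
  rw [perturb, integrable_withDensity_iff_integrable_smul' (by fun_prop)
    (ae_of_all _ fun _ => ENNReal.ofReal_lt_top)]
  simp only [ENNReal.toReal_ofReal (one_add_nonneg_of_abs_le_one (hf1 _)), smul_eq_mul]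
  refine hg.bdd_mul (c := 2) (by fun_prop) (ae_of_all _ fun x => ?_)
  rw [Real.norm_eq_abs]
  linarith [abs_add_le 1 (f x), hf1 x, abs_one (α := ℝ)]

lemma integral_perturb (hf : Measurable f) (hf1 : ∀ x, |f x| ≤ 1) {g : X → ℝ}
    (hg : Integrable g μ) : ∫ x, g x ∂perturb μ f = ∫ x, g x ∂μ + ∫ x, f x * g x ∂μ := by
  have hfg : Integrable (fun x => f x * g x) μ :=
    hg.bdd_mul (c := 1) hf.aestronglyMeasurable (ae_of_all _ hf1)
  rw [perturb, integral_withDensity_eq_integral_toReal_smul (by fun_prop)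
    (ae_of_all _ fun _ => ENNReal.ofReal_lt_top), ← integral_add hg hfg]
  simp only [ENNReal.toReal_ofReal (one_add_nonneg_of_abs_le_one (hf1 _)), smul_eq_mul, add_mul,
    one_mul]

lemma half_perturb_add_half_perturb_neg (hf : Measurable f) (hf1 : ∀ x, |f x| ≤ 1) :
    (2 : ENNReal)⁻¹ • perturb μ f + (2 : ENNReal)⁻¹ • perturb μ (-f) = μ := by
  have hsum (x : X) : ENNReal.ofReal (1 + f x) + ENNReal.ofReal (1 + (-f) x) = 2 := by
    rw [Pi.neg_apply, ← ENNReal.ofReal_add (one_add_nonneg_of_abs_le_one (hf1 x))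
      (one_add_nonneg_of_abs_le_one ((abs_neg (f x)).trans_le (hf1 x))),
      add_add_add_comm, add_neg_cancel, add_zero]
    norm_num
  rw [perturb, perturb, ← withDensity_smul' _ _ (by simp), ← withDensity_smul' _ _ (by simp),
    ← withDensity_add_left (by fun_prop)]
  convert withDensity_one (μ := μ) using 2
  ext x
  simp only [Pi.add_apply, Pi.smul_apply, smul_eq_mul, ← mul_add, hsum, Pi.one_apply]
  exact ENNReal.inv_mul_cancel two_ne_zero ENNReal.ofNat_ne_top

lemma ae_eq_zero_of_perturb_eq_perturb_neg [SigmaFinite μ] (hf : Measurable f)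
    (hf1 : ∀ x, |f x| ≤ 1) (h : perturb μ f = perturb μ (-f)) : f =ᵐ[μ] 0 := by
  rw [perturb, perturb, withDensity_eq_iff_of_sigmaFinite (by fun_prop) (by fun_prop)] at h
  filter_upwards [h] with x hx
  rw [Pi.neg_apply, ENNReal.ofReal_eq_ofReal_iff (one_add_nonneg_of_abs_le_one (hf1 x))
    (one_add_nonneg_of_abs_le_one ((abs_neg (f x)).trans_le (hf1 x)))] at hx
  rw [Pi.zero_apply]
  linarith

end MeasureTheory.Measure

lemma exists_ne_zero_abs_le_one_sum_smul_eq_zero {ι V : Type*} [Fintype ι] [AddCommGroup V]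
    [Module ℝ V] [FiniteDimensional ℝ V] (v : ι → V) (h : Module.finrank ℝ V < Fintype.card ι) :
    ∃ c : ι → ℝ, c ≠ 0 ∧ (∀ i, |c i| ≤ 1) ∧ ∑ i, c i • v i = 0 := by
  obtain ⟨g, hg, i, hi⟩ := Fintype.not_linearIndependent_iff.mp
    (mt (LinearIndependent.fintype_card_le_finrank (b := v)) h.not_ge)
  have hg0 : ‖g‖ ≠ 0 := norm_ne_zero_iff.mpr (Function.ne_iff.mpr ⟨i, hi⟩)
  refine ⟨‖g‖⁻¹ • g, smul_ne_zero (inv_ne_zero hg0) (norm_ne_zero_iff.mp hg0), fun j => ?_, ?_⟩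
  · rw [Pi.smul_apply, smul_eq_mul, abs_mul, abs_inv, abs_norm,
      inv_mul_le_one₀ (norm_pos_iff.mpr (norm_ne_zero_iff.mp hg0))]
    exact norm_le_pi_norm g j
  · simp only [Pi.smul_apply, smul_eq_mul, mul_smul, ← Finset.smul_sum, hg, smul_zero]

/-- A monomial of degree `≤ d` in `x₁, …, xₙ`, made homogeneous of degree `d` by a slack
variable `x₀` (stars and bars). -/
noncomputable def homogenize {n d : ℕ} (α : {α : Fin n →₀ ℕ // mdeg α ≤ d}) :
    Sym (Fin (n + 1)) d :=
  ⟨(Finsupp.toMultiset α.1).map Fin.castSucc + Multiset.replicate (d - mdeg α.1) (Fin.last n), by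
    simp only [Multiset.card_add, Multiset.card_map, Multiset.card_replicate,
      Finsupp.card_toMultiset]
    exact Nat.add_sub_cancel' α.2⟩

lemma homogenize_injective (n d : ℕ) : Function.Injective (homogenize (n := n) (d := d)) := by
  classical
  intro α β h
  refine Subtype.ext (Finsupp.ext fun i => ?_)
  have hcount := congrArg (Multiset.count (Fin.castSucc i) ∘ Subtype.val) h
  simpa [homogenize, Multiset.count_map_eq_count' _ _ (Fin.castSucc_injective n),
    Multiset.count_replicate, (Fin.castSucc_lt_last i).ne'] using hcount

instance (n d : ℕ) : Finite {α : Fin n →₀ ℕ // mdeg α ≤ d} :=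
  Finite.of_injective _ (homogenize_injective n d)

lemma finrank_mdeg_le_fun_le_choose (n d : ℕ) :
    Module.finrank ℝ ({α : Fin n →₀ ℕ // mdeg α ≤ d} → ℝ) ≤ (n + d).choose d := by
  have := Fintype.ofFinite {α : Fin n →₀ ℕ // mdeg α ≤ d}
  classical
  calc Module.finrank ℝ ({α : Fin n →₀ ℕ // mdeg α ≤ d} → ℝ)
      = Fintype.card {α : Fin n →₀ ℕ // mdeg α ≤ d} := Module.finrank_fintype_fun_eq_card ℝ
    _ ≤ Fintype.card (Sym (Fin (n + 1)) d) :=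
      Fintype.card_le_of_injective _ (homogenize_injective n d)
    _ = (n + d).choose d := by
      rw [Sym.card_sym_eq_choose, Fintype.card_fin, Nat.add_right_comm, Nat.add_sub_cancel]

section Moments

variable {n d : ℕ} {μ : Measure (Fin n → ℝ)}

lemma exists_sum_indicator_orthogonal_monomials {ι : Type*} [Fintype ι]
    {U : ι → Set (Fin n → ℝ)} (hU : ∀ i, MeasurableSet (U i))
    (hint : ∀ α, mdeg α ≤ d → Integrable (fun x => ∏ i, x i ^ α i) μ)
    (hcard : (n + d).choose d < Fintype.card ι) :
    ∃ c : ι → ℝ, c ≠ 0 ∧ (∀ i, |c i| ≤ 1) ∧ ∀ α, mdeg α ≤ d →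
      ∫ x, (∑ i, (U i).indicator (fun _ => c i) x) * ∏ j, x j ^ α j ∂μ = 0 := by
  let moments (i : ι) (α : {α : Fin n →₀ ℕ // mdeg α ≤ d}) : ℝ :=
    ∫ x in U i, ∏ j, x j ^ α.1 j ∂μ
  obtain ⟨c, hc0, hc1, hcm⟩ := exists_ne_zero_abs_le_one_sum_smul_eq_zero moments
    ((finrank_mdeg_le_fun_le_choose n d).trans_lt hcard)
  refine ⟨c, hc0, hc1, fun α hα => ?_⟩
  rw [integral_sum_indicator_mul c hU (hint α hα)]
  simpa [moments] using congrFun hcm ⟨α, hα⟩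

variable {K : Set (Fin n → ℝ)} {y : (Fin n →₀ ℕ) → ℝ}

lemma isFiniteMeasure_of_mem_measSet (hμ : μ ∈ measSet K d y) : IsFiniteMeasure μ := by
  have h0 := (hμ.2 0 (by simp [mdeg])).1
  simp only [Finsupp.coe_zero, Pi.zero_apply, pow_zero, Finset.prod_const_one] at h0
  exact (integrable_const_iff.mp h0).resolve_left one_ne_zero

lemma perturb_mem_measSet (hμ : μ ∈ measSet K d y) {f : (Fin n → ℝ) → ℝ}
    (hf : Measurable f) (hf1 : ∀ x, |f x| ≤ 1)
    (horth : ∀ α, mdeg α ≤ d → ∫ x, f x * ∏ i, x i ^ α i ∂μ = 0) :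
    μ.perturb f ∈ measSet K d y := by
  refine ⟨μ.perturb_absolutelyContinuous hμ.1, fun α hα => ?_⟩
  obtain ⟨hint, hmom⟩ := hμ.2 α hα
  exact ⟨Measure.integrable_perturb hf hf1 hint,
    by rw [Measure.integral_perturb hf hf1 hint, hmom, horth α hα, add_zero]⟩

end Moments

theorem extreme_point_finitely_atomic_general {n d : ℕ} (K : Set (Fin n → ℝ))
    (y : (Fin n →₀ ℕ) → ℝ)
    (μ : Measure (Fin n → ℝ)) (hμ : μ ∈ measSet K d y)
    (hext : ∀ μ₁ μ₂ : Measure (Fin n → ℝ), μ₁ ∈ measSet K d y → μ₂ ∈ measSet K d y →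
      μ = (2 : ENNReal)⁻¹ • μ₁ + (2 : ENNReal)⁻¹ • μ₂ → μ₁ = μ₂) :
    ∃ s : Finset (Fin n → ℝ), μ (↑s : Set (Fin n → ℝ))ᶜ = 0 ∧ s.card ≤ (n + d).choose d := by
  by_contra hcon
  have := isFiniteMeasure_of_mem_measSet hμ
  obtain ⟨t, htc, U, hU, hUd⟩ := exists_pairwise_disjoint_isOpen_pos hcon
  have hUm (p : t) : MeasurableSet (U p) := (hU p).1.measurableSet
  obtain ⟨c, hc0, hc1, hcorth⟩ := exists_sum_indicator_orthogonal_monomials hUm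
    (fun α hα => (hμ.2 α hα).1) (by rw [Fintype.card_coe, htc]; exact Nat.lt_succ_self _)
  set f : (Fin n → ℝ) → ℝ := fun x => ∑ p, (U p).indicator (fun _ => c p) x
  have hf : Measurable f := Finset.measurable_sum _ fun p _ => measurable_const.indicator (hUm p)
  have hf1 : ∀ x, |f x| ≤ 1 := abs_sum_indicator_le_one c hUd hc1
  have horth : ∀ α, mdeg α ≤ d → ∫ x, f x * ∏ i, x i ^ α i ∂μ = 0 := hcorth
  have hmem := perturb_mem_measSet hμ hf hf1 horth
  have hmem_neg := perturb_mem_measSet hμ hf.neg (fun x => (abs_neg (f x)).trans_le (hf1 x))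
    fun α hα => by simp only [Pi.neg_apply, neg_mul, integral_neg, horth α hα, neg_zero]
  have hf0 : f =ᵐ[μ] 0 := Measure.ae_eq_zero_of_perturb_eq_perturb_neg hf hf1 <|
    hext _ _ hmem hmem_neg (Measure.half_perturb_add_half_perturb_neg hf hf1).symm
  obtain ⟨p, hp⟩ := Function.ne_iff.mp hc0
  refine (hU p).2.ne' (measure_mono_null (fun x hx => ?_) (ae_iff.mp hf0))
  exact fun hfx => hp ((sum_indicator_apply_of_mem c hUd hx).symm.trans hfx)

/-- An extreme point of the convex set `meas(y,K)` is finitely atomic, with at most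
`binom(n+d,d)` atoms. -/
theorem extreme_point_finitely_atomic {n d : ℕ} (K : Set (Fin n → ℝ))
    (y : (Fin n →₀ ℕ) → ℝ) (hne : (measSet K d y).Nonempty)
    (μ : Measure (Fin n → ℝ)) (hμ : μ ∈ measSet K d y)
    (hext : ∀ μ₁ μ₂ : Measure (Fin n → ℝ), μ₁ ∈ measSet K d y → μ₂ ∈ measSet K d y →
      μ = (2 : ENNReal)⁻¹ • μ₁ + (2 : ENNReal)⁻¹ • μ₂ → μ₁ = μ₂) :
    ∃ s : Finset (Fin n → ℝ), μ (↑s : Set (Fin n → ℝ))ᶜ = 0 ∧ s.card ≤ (n + d).choose d :=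
  extreme_point_finitely_atomic_general K y μ hμ hext
end

section
/- Let y ∈ ℝ^{N}, with N = binom(n+d,d), be a tms of degree d = 2d_0 + 1, admitting an r-atomic representing measure μ where r = rank M_{d_0}(y). Let z be the degree-(d+1) tms induced by μ. Then rank M_{d_0+1}(z) = rank M_{d_0}(y), i.e., z is a flat extension of y. -/
open MvPolynomial

/-- The finite set of multi-indices of total degree at most `k`. -/
noncomputable def degLE (n k : ℕ) : Finset (Fin n →₀ ℕ) :=
  (Finset.Iic (Finsupp.equivFunOnFinite.symm fun _ : Fin n => k)).filter
    fun α => (α.sum fun _ m => m) ≤ k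

/-- The `k`-th order moment matrix of a (truncated) moment sequence `w`, indexed by the
multi-indices of degree at most `k`, with `(α,β)` entry `w_{α+β}`. -/
noncomputable def momMat (n k : ℕ) (w : (Fin n →₀ ℕ) → ℝ) :
    Matrix (degLE n k) (degLE n k) ℝ :=
  fun α β => w ((α : Fin n →₀ ℕ) + (β : Fin n →₀ ℕ))

/-!
Writing `μ = ∑ⱼ λⱼ δ_{uⱼ}`, every moment matrix of `μ` factors as `V Λ Vᵀ` through `ℝʳ`, with `V`
the Vandermonde-type matrix of the monomials evaluated at the atoms, so `rank M_{d₀+1}(z) ≤ r`.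
Conversely `M_{d₀}(y) = M_{d₀}(z)` is the leading principal block of `M_{d₀+1}(z)`, whence
`r = rank M_{d₀}(y) ≤ rank M_{d₀+1}(z)`.
-/

lemma degree_le_of_mem_degLE {n k : ℕ} {α : Fin n →₀ ℕ} (h : α ∈ degLE n k) :
    α.degree ≤ k :=
  (Finset.mem_filter.mp h).2

lemma degLE_mono {n k l : ℕ} (hkl : k ≤ l) : degLE n k ⊆ degLE n l := by
  intro α hα
  simp only [degLE, Finset.mem_filter, Finset.mem_Iic] at hα ⊢
  refine ⟨fun i => ?_, hα.2.trans hkl⟩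
  simpa using (hα.1 i).trans hkl

lemma degree_add_le_of_mem_degLE {n k : ℕ} {α β : Fin n →₀ ℕ} (hα : α ∈ degLE n k)
    (hβ : β ∈ degLE n k) : (α + β).degree ≤ 2 * k := by
  rw [map_add]
  have := degree_le_of_mem_degLE hα
  have := degree_le_of_mem_degLE hβ
  omega

lemma momMat_congr {n k : ℕ} {w w' : (Fin n →₀ ℕ) → ℝ}
    (h : ∀ α : Fin n →₀ ℕ, α.degree ≤ 2 * k → w α = w' α) : momMat n k w = momMat n k w' := by
  ext α β
  exact h _ (degree_add_le_of_mem_degLE α.2 β.2)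

lemma momMat_eq_submatrix {n k l : ℕ} (hkl : k ≤ l) (w : (Fin n →₀ ℕ) → ℝ) :
    momMat n k w =
      (momMat n l w).submatrix (Set.inclusion (degLE_mono hkl)) (Set.inclusion (degLE_mono hkl)) :=
  rfl

lemma rank_momMat_mono {n k l : ℕ} (hkl : k ≤ l) (w : (Fin n →₀ ℕ) → ℝ) :
    (momMat n k w).rank ≤ (momMat n l w).rank := by
  rw [momMat_eq_submatrix hkl]
  exact Matrix.rank_submatrix_le _ _ _

section Atomic

variable {ι : Type*} [Fintype ι] {n k : ℕ} (u : ι → Fin n → ℝ) (lam : ι → ℝ)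

lemma momMat_eq_mul_of_atomic {w : (Fin n →₀ ℕ) → ℝ}
    (hw : ∀ α : Fin n →₀ ℕ, α.degree ≤ 2 * k → w α = ∑ j, lam j * ∏ i, u j i ^ α i) :
    momMat n k w =
      Matrix.of (fun (α : degLE n k) j => lam j * ∏ i, u j i ^ (α : Fin n →₀ ℕ) i) *
        Matrix.of (fun j (β : degLE n k) => ∏ i, u j i ^ (β : Fin n →₀ ℕ) i) := by
  ext α β
  rw [Matrix.mul_apply, momMat, hw _ (degree_add_le_of_mem_degLE α.2 β.2)]
  refine Finset.sum_congr rfl fun j _ => ?_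
  simp only [Finsupp.add_apply, pow_add, Finset.prod_mul_distrib, Matrix.of_apply, mul_assoc]

lemma rank_momMat_le_of_atomic {w : (Fin n →₀ ℕ) → ℝ}
    (hw : ∀ α : Fin n →₀ ℕ, α.degree ≤ 2 * k → w α = ∑ j, lam j * ∏ i, u j i ^ α i) :
    (momMat n k w).rank ≤ Fintype.card ι := by
  rw [momMat_eq_mul_of_atomic u lam hw]
  exact (Matrix.rank_mul_le_left _ _).trans (Matrix.rank_le_card_width _)

end Atomic

theorem flat_extension_of_rank_atomic_general {n d0 r : ℕ}
    (u : Fin r → (Fin n → ℝ))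
    (lam : Fin r → ℝ)
    (y z : (Fin n →₀ ℕ) → ℝ)
    (hy : ∀ α : Fin n →₀ ℕ, (α.sum fun _ m => m) ≤ 2 * d0 + 1 →
      y α = ∑ j, lam j * ∏ i, u j i ^ α i)
    (hz : ∀ α : Fin n →₀ ℕ, (α.sum fun _ m => m) ≤ 2 * (d0 + 1) →
      z α = ∑ j, lam j * ∏ i, u j i ^ α i)
    (hr : (momMat n d0 y).rank = r) :
    (momMat n (d0 + 1) z).rank = (momMat n d0 y).rank := by
  have hyz : momMat n d0 y = momMat n d0 z :=
    momMat_congr fun α hα =>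
      (hy α (hα.trans (by omega))).trans (hz α (hα.trans (by omega))).symm
  have upper : (momMat n (d0 + 1) z).rank ≤ r := by
    simpa using rank_momMat_le_of_atomic u lam hz
  have lower : (momMat n d0 y).rank ≤ (momMat n (d0 + 1) z).rank :=
    hyz ▸ rank_momMat_mono (Nat.le_succ d0) z
  omega

/-- Let `y` be a tms of degree `d = 2d₀+1` admitting an `r`-atomic representing measure
`μ = ∑ λ_j δ_{u_j}` with `r = rank M_{d₀}(y)`, and let `z` be the degree-`(d+1)` tms
induced by `μ`. Then `rank M_{d₀+1}(z) = rank M_{d₀}(y)`, i.e. `z` is a flat extension. -/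
theorem flat_extension_of_rank_atomic {n d0 r : ℕ}
    (u : Fin r → (Fin n → ℝ)) (hu : Function.Injective u)
    (lam : Fin r → ℝ) (hlam : ∀ j, 0 < lam j)
    (y z : (Fin n →₀ ℕ) → ℝ)
    (hy : ∀ α : Fin n →₀ ℕ, (α.sum fun _ m => m) ≤ 2 * d0 + 1 →
      y α = ∑ j, lam j * ∏ i, u j i ^ α i)
    (hz : ∀ α : Fin n →₀ ℕ, (α.sum fun _ m => m) ≤ 2 * (d0 + 1) →
      z α = ∑ j, lam j * ∏ i, u j i ^ α i)
    (hr : (momMat n d0 y).rank = r) :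
    (momMat n (d0 + 1) z).rank = (momMat n d0 y).rank :=
  flat_extension_of_rank_atomic_general u lam y z hy hz hr
end

section
/- Let w be a tms of degree 2k and suppose the truncation w|_{2t} is flat for some 0 < t ≤ k, M_k(w) ⪰ 0, and ker M_k(w) ⊆ I(S) for some set S ⊆ ℝⁿ. Then for every α with |α| ≥ t there exists a polynomial ψ_α of degree ≤ t−1 with x^α ≡ ψ_α mod I(S); consequently the quotient ring ℝ[x]/I(S) is finite-dimensional and S is a finite set. -/
/-!
Positivity of `M_k(w)` gives `ker M_t(w) ⊆ ker M_k(w)` (Cauchy–Schwarz for `(p, q) ↦ L_w(p q)`),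
so flatness puts every monomial of degree `t` into `ℝ[x]_{≤ t-1} + I(S)`. This sum is closed under
multiplication by the variables, hence is all of `ℝ[x]`; so `ℝ[x] ⧸ I(S)` is finite-dimensional.
Each point of `S` is an `ℝ`-algebra map `ℝ[x] ⧸ I(S) → ℝ`, and a finite-dimensional algebra has
only finitely many of those.
-/

open MvPolynomial

/-- `f` belongs to the kernel of the `k`-th moment matrix of the tms `w`. -/
def memKerM {n : ℕ} (w : (Fin n →₀ ℕ) → ℝ) (k : ℕ) (f : MvPolynomial (Fin n) ℝ) : Prop :=
  f.totalDegree ≤ k ∧ ∀ β : Fin n →₀ ℕ, mdeg β ≤ k → Riesz w (f * monomial β 1) = 0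

namespace MvPolynomial

variable {σ K : Type*}

theorem restrictTotalDegree_sup_eq_top [CommSemiring K] {I : Ideal (MvPolynomial σ K)} {d : ℕ}
    (h : ∀ α : σ →₀ ℕ, (α.sum fun _ e => e) = d + 1 →
      monomial α 1 ∈ restrictTotalDegree σ K d ⊔ I.restrictScalars K) :
    restrictTotalDegree σ K d ⊔ I.restrictScalars K = ⊤ := by
  set W := restrictTotalDegree σ K d ⊔ I.restrictScalars K
  have monomial_mem : ∀ α : σ →₀ ℕ, (α.sum fun _ e => e) ≤ d + 1 → monomial α 1 ∈ W := by
    intro α hα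
    rcases hα.lt_or_eq with hlt | heq
    · refine Submodule.mem_sup_left ((mem_restrictTotalDegree _ _ _).mpr ?_)
      exact (totalDegree_monomial_le _ _).trans (Nat.le_of_lt_succ hlt)
    · exact h α heq
  have low_degree_mem : ∀ p : MvPolynomial σ K, p.totalDegree ≤ d + 1 → p ∈ W := by
    intro p hp
    rw [p.as_sum]
    refine Submodule.sum_mem _ fun α hα => ?_
    rw [← mul_one (coeff α p), ← smul_eq_mul, ← smul_monomial]
    exact Submodule.smul_mem _ _ (monomial_mem α ((le_totalDegree hα).trans hp))
  have mul_X_mem : ∀ p ∈ W, ∀ i, p * X i ∈ W := by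
    intro p hp i
    obtain ⟨ψ, hψ, q, hq, rfl⟩ := Submodule.mem_sup.mp hp
    rw [add_mul]
    refine add_mem (low_degree_mem _ ?_) (Submodule.mem_sup_right (I.mul_mem_right _ hq))
    have hX : (X i : MvPolynomial σ K).totalDegree ≤ 1 :=
      (totalDegree_monomial_le _ _).trans (by simp)
    exact (totalDegree_mul _ _).trans
      (add_le_add ((mem_restrictTotalDegree _ _ _).mp hψ) hX)
  refine Submodule.eq_top_iff'.mpr fun p => ?_
  induction p using MvPolynomial.induction_on with
  | C a =>
    exact Submodule.mem_sup_left
      ((mem_restrictTotalDegree _ _ _).mpr ((totalDegree_C a).trans_le (Nat.zero_le d)))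
  | add p q hp hq => exact add_mem hp hq
  | mul_X p i hp => exact mul_X_mem p hp i

theorem mem_restrictTotalDegree_sup_vanishingIdeal_iff [Field K] {S : Set (σ → K)} {d : ℕ}
    {p : MvPolynomial σ K} :
    p ∈ restrictTotalDegree σ K d ⊔ (vanishingIdeal K S).restrictScalars K ↔
      ∃ ψ : MvPolynomial σ K, ψ.totalDegree ≤ d ∧ ∀ x ∈ S, eval x p = eval x ψ := by
  simp only [Submodule.mem_sup, mem_restrictTotalDegree, Submodule.restrictScalars_mem,
    mem_vanishingIdeal_iff, aeval_eq_eval]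
  constructor
  · rintro ⟨ψ, hψ, q, hq, rfl⟩
    exact ⟨ψ, hψ, fun x hx => by rw [map_add, hq x hx, add_zero]⟩
  · rintro ⟨ψ, hψ, hp⟩
    exact ⟨ψ, hψ, p - ψ, fun x hx => by rw [map_sub, hp x hx, sub_self], add_sub_cancel ψ p⟩

theorem finite_quotient_of_restrictTotalDegree_sup_eq_top [CommRing K] [Finite σ]
    {I : Ideal (MvPolynomial σ K)} {d : ℕ}
    (h : restrictTotalDegree σ K d ⊔ I.restrictScalars K = ⊤) :
    Module.Finite K (MvPolynomial σ K ⧸ I) := by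
  refine Module.Finite.of_surjective
    ((Ideal.Quotient.mkₐ K I).toLinearMap ∘ₗ (restrictTotalDegree σ K d).subtype) ?_
  intro r
  obtain ⟨p, rfl⟩ := Ideal.Quotient.mk_surjective r
  obtain ⟨ψ, hψ, q, hq, rfl⟩ := Submodule.mem_sup.mp (h ▸ Submodule.mem_top : p ∈ _)
  refine ⟨⟨ψ, hψ⟩, ?_⟩
  simp [Ideal.Quotient.eq_zero_iff_mem.mpr hq]

theorem finite_of_finite_quotient_vanishingIdeal [Field K] {S : Set (σ → K)}
    [Module.Finite K (MvPolynomial σ K ⧸ vanishingIdeal K S)] : S.Finite := by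
  let point : S → (MvPolynomial σ K ⧸ vanishingIdeal K S →ₐ[K] K) := fun x =>
    Ideal.Quotient.liftₐ _ (aeval x.1) fun p hp => hp x.1 x.2
  refine Set.finite_coe_iff.mp (Finite.of_injective point fun x y hxy => ?_)
  ext i
  simpa [point] using congrArg (fun f => f (Ideal.Quotient.mk _ (X i))) hxy

end MvPolynomial

section Riesz

variable {n : ℕ} (w : (Fin n →₀ ℕ) → ℝ)

theorem Riesz_eq_constr : Riesz w = (basisMonomials (Fin n) ℝ).constr ℝ w := by
  funext p
  rw [Module.Basis.constr_apply, Finsupp.sum]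
  rfl

theorem Riesz_mul_eq_zero_of_forall_monomial {f g : MvPolynomial (Fin n) ℝ}
    (h : ∀ β ∈ g.support, Riesz w (f * monomial β 1) = 0) : Riesz w (f * g) = 0 := by
  rw [g.as_sum, Finset.mul_sum, Riesz_eq_constr, map_sum]
  refine Finset.sum_eq_zero fun β hβ => ?_
  rw [show monomial β (coeff β g) = coeff β g • monomial β 1 by
      rw [smul_monomial, smul_eq_mul, mul_one],
    mul_smul_comm, map_smul, ← Riesz_eq_constr, h β hβ, smul_zero]

variable {w} {k : ℕ}

/-- Cauchy–Schwarz: `λ ↦ L_w((f + λ g)²) = 2 λ L_w(f g) + λ² L_w(g²)` is nonnegative, so its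
discriminant `(2 L_w(f g))²` is `≤ 0`. -/
theorem Riesz_mul_eq_zero_of_Riesz_sq_eq_zero
    (hpsd : ∀ p : MvPolynomial (Fin n) ℝ, p.totalDegree ≤ k → 0 ≤ Riesz w (p ^ 2))
    {f g : MvPolynomial (Fin n) ℝ} (hf : f.totalDegree ≤ k) (hg : g.totalDegree ≤ k)
    (hf0 : Riesz w (f ^ 2) = 0) : Riesz w (f * g) = 0 := by
  have hquad : ∀ l : ℝ, 0 ≤ Riesz w (g ^ 2) * (l * l) + 2 * Riesz w (f * g) * l + 0 := by
    intro l
    have hdeg : (f + l • g).totalDegree ≤ k :=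
      (totalDegree_add _ _).trans (max_le hf ((totalDegree_smul_le _ _).trans hg))
    have hexpand : (f + l • g) ^ 2 = f ^ 2 + (2 * l) • (f * g) + (l * l) • g ^ 2 := by
      simp only [smul_eq_C_mul, map_mul, map_ofNat]
      ring
    have := hpsd _ hdeg
    rw [hexpand, Riesz_eq_constr, map_add, map_add, map_smul, map_smul, ← Riesz_eq_constr, hf0,
      smul_eq_mul, smul_eq_mul] at this
    linarith
  have hdisc := discrim_le_zero hquad
  rw [discrim, mul_zero, sub_zero] at hdisc
  nlinarith [sq_nonneg (Riesz w (f * g))]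

theorem memKerM.of_le {t : ℕ} (htk : t ≤ k)
    (hpsd : ∀ p : MvPolynomial (Fin n) ℝ, p.totalDegree ≤ k → 0 ≤ Riesz w (p ^ 2))
    {f : MvPolynomial (Fin n) ℝ} (hf : memKerM w t f) : memKerM w k f := by
  obtain ⟨hdeg, hzero⟩ := hf
  have hff : Riesz w (f ^ 2) = 0 := by
    rw [sq]
    exact Riesz_mul_eq_zero_of_forall_monomial w fun β hβ =>
      hzero β ((le_totalDegree hβ).trans hdeg)
  refine ⟨hdeg.trans htk, fun β hβ => ?_⟩
  exact Riesz_mul_eq_zero_of_Riesz_sq_eq_zero hpsd (hdeg.trans htk)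
    ((totalDegree_monomial_le _ _).trans hβ) hff

end Riesz

/-- Let `w` be a tms of degree `2k` whose truncation `w|_{2t}` is flat for some
`0 < t ≤ k` (every monomial of degree `t` is congruent, modulo `ker M_t(w)`, to a
polynomial of degree ≤ t−1), with `M_k(w) ⪰ 0` and `ker M_k(w) ⊆ I(S)`. Then every
monomial `x^α` with `|α| ≥ t` is congruent mod `I(S)` to a polynomial of degree ≤ t−1,
and consequently `S` is finite. -/
theorem flat_truncation_finite_variety {n k t : ℕ} (ht0 : 0 < t) (htk : t ≤ k)
    (w : (Fin n →₀ ℕ) → ℝ) (S : Set (Fin n → ℝ))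
    (hpsd : ∀ p : MvPolynomial (Fin n) ℝ, p.totalDegree ≤ k → 0 ≤ Riesz w (p ^ 2))
    (hflat : ∀ α : Fin n →₀ ℕ, mdeg α = t → ∃ φ : MvPolynomial (Fin n) ℝ,
      φ.totalDegree ≤ t - 1 ∧ memKerM w t (monomial α 1 - φ))
    (hker : ∀ f : MvPolynomial (Fin n) ℝ, memKerM w k f → ∀ x ∈ S, eval x f = 0) :
    (∀ α : Fin n →₀ ℕ, t ≤ mdeg α → ∃ ψ : MvPolynomial (Fin n) ℝ,
      ψ.totalDegree ≤ t - 1 ∧ ∀ x ∈ S, eval x (monomial α 1) = eval x ψ) ∧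
    S.Finite := by
  have htop : restrictTotalDegree (Fin n) ℝ (t - 1) ⊔
      (vanishingIdeal ℝ S).restrictScalars ℝ = ⊤ := by
    refine restrictTotalDegree_sup_eq_top fun α hα => ?_
    obtain ⟨φ, hφ, hker_t⟩ := hflat α (by unfold mdeg; omega)
    refine mem_restrictTotalDegree_sup_vanishingIdeal_iff.mpr ⟨φ, hφ, fun x hx => ?_⟩
    exact sub_eq_zero.mp (by simpa using hker _ (hker_t.of_le htk hpsd) x hx)
  have : Module.Finite ℝ (MvPolynomial (Fin n) ℝ ⧸ vanishingIdeal ℝ S) :=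
    finite_quotient_of_restrictTotalDegree_sup_eq_top htop
  refine ⟨fun α _ => ?_, finite_of_finite_quotient_vanishingIdeal⟩
  exact mem_restrictTotalDegree_sup_vanishingIdeal_iff.mp (htop ▸ Submodule.mem_top)
end
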